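/- arXiv:1007.0681 — 3 statements merged into one kernel-verified Lean document; each statement's English description precedes it below -/
import Mathlib

section
/- For every 1 ≤ p < ∞ there is a constant C = C(p) > 0 with the following property. Let V : ℝ² → ℝ² be a Borel measurable vector field vanishing outside the open unit ball B² and with ∫_{ℝ²} ‖V‖^p dx < ∞, and let 0 < r ≤ 1. Then there exist N ∈ ℕ and points y₁,…,y_N ∈ ℝ² such that: (i) the balls B_r(y₁),…,B_r(y_N) cover B²; (ii) the balls B_{r/2}(y₁),…,B_{r/2}(y_N) are pairwise disjoint; (iii) ∑_{i=1}^N ∫_{∂B_r(y_i)} |⟨V(y), (y−y_i)/r⟩|^p dH¹(y) ≤ C r^{−1} ∫_{ℝ²} ‖V‖^p dx. -/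
/-!
Bound the normal component by `‖V‖`, and parametrise `∂B_r(c)` by `θ ↦ c + r e^{iθ}`, which is
`r`-Lipschitz: the flux through `∂B_r(c)` is at most `r G(c)`, where
`G(c) = ∫₀^{2π} ‖V(c + r e^{iθ})‖^p dθ`, and by Fubini and translation invariance
`∫ G = 2π ∫ ‖V‖^p`. Take the centres on a translated grid `t + rℤ²`: the spacing `r` makes the
half-radius balls disjoint, and the half-diagonal `r/√2` of a grid cell is less than `r`, so the
balls cover. The cells `rq + [0, r)²` tile the plane, hence the mean of `∑_q G(t + rq)` over
`t ∈ [0, r)²` is at most `∫ G / r²`; a translate `t` below the mean gives `C = 2π`.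
-/

open MeasureTheory Metric Real RealInnerProductSpace ENNReal NNReal Set

theorem setLIntegral_hausdorffMeasure_one_le_of_subset_image
    {X : Type*} [EMetricSpace X] [MeasurableSpace X] [BorelSpace X]
    {f : ℝ → X} {K : ℝ≥0} (hf : LipschitzWith K f) {S : Set X} {I : Set ℝ} (hS : S ⊆ f '' I)
    (g : X → ℝ≥0∞) :
    ∫⁻ x in S, g x ∂μH[1] ≤ K * ∫⁻ θ in I, g (f θ) := by
  have hfm : Measurable f := hf.continuous.measurable
  have hle : μH[1].restrict S ≤ ((K : ℝ≥0∞) • volume.restrict I).map f := by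
    refine Measure.le_iff.2 fun A hA => ?_
    rw [Measure.restrict_apply hA, Measure.map_apply hfm hA, Measure.smul_apply,
      Measure.restrict_apply (hfm hA), smul_eq_mul, ← hausdorffMeasure_real]
    calc μH[1] (A ∩ S) ≤ μH[1] (f '' (f ⁻¹' A ∩ I)) := by
          refine measure_mono fun x ⟨hxA, hxS⟩ => ?_
          obtain ⟨θ, hθ, rfl⟩ := hS hxS
          exact ⟨θ, ⟨hxA, hθ⟩, rfl⟩
      _ ≤ K ^ (1 : ℝ) * μH[1] (f ⁻¹' A ∩ I) := hf.hausdorffMeasure_image_le zero_le_one _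
      _ = K * μH[1] (f ⁻¹' A ∩ I) := by rw [ENNReal.rpow_one]
  calc ∫⁻ x in S, g x ∂μH[1] ≤ ∫⁻ x, g x ∂((K : ℝ≥0∞) • volume.restrict I).map f :=
        lintegral_mono' hle le_rfl
    _ ≤ ∫⁻ θ, g (f θ) ∂((K : ℝ≥0∞) • volume.restrict I) := lintegral_map_le _ _
    _ = K * ∫⁻ θ in I, g (f θ) := lintegral_smul_measure _ _

theorem lintegral_lintegral_add_comp {G α : Type*} [MeasurableSpace G] [AddGroup G]
    [MeasurableAdd₂ G] {ν : Measure G} [SFinite ν] [ν.IsAddRightInvariant]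
    [MeasurableSpace α] {μ : Measure α} [SFinite μ] {f : α → G} (hf : Measurable f)
    {g : G → ℝ≥0∞} (hg : Measurable g) :
    ∫⁻ c, ∫⁻ θ, g (c + f θ) ∂μ ∂ν = μ univ * ∫⁻ x, g x ∂ν := by
  rw [lintegral_lintegral_swap (f := fun c θ => g (c + f θ))
    (hg.comp (measurable_fst.add (hf.comp measurable_snd))).aemeasurable]
  simp_rw [lintegral_add_right_eq_self g, lintegral_const, mul_comm]

theorem abs_inner_smul_sub_rpow_le_norm_rpow {E : Type*} [NormedAddCommGroup E]
    [InnerProductSpace ℝ E] {p : ℝ} (hp : 0 ≤ p) {c x : E} {r : ℝ} (hx : x ∈ sphere c r)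
    (v : E) : |⟪v, r⁻¹ • (x - c)⟫| ^ p ≤ ‖v‖ ^ p := by
  have hn : ‖r⁻¹ • (x - c)‖ ≤ 1 := by
    rw [norm_smul, norm_inv, ← dist_eq_norm, mem_sphere.1 hx]
    exact inv_mul_le_one_of_le₀ (le_abs_self r) (abs_nonneg r)
  refine rpow_le_rpow (abs_nonneg _) ?_ hp
  calc |⟪v, r⁻¹ • (x - c)⟫| ≤ ‖v‖ * ‖r⁻¹ • (x - c)‖ := abs_real_inner_le_norm _ _
    _ ≤ ‖v‖ := mul_le_of_le_one_right (norm_nonneg v) hn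

section Lattice

variable {ι : Type*}

noncomputable def latticePoint (r : ℝ) (q : ι → ℤ) : EuclideanSpace ℝ ι :=
  WithLp.toLp 2 fun i => r * q i

/-- The fibres `cellIndex r ⁻¹' {q}` are the half-open cubes `r • (q + [0, 1)^ι)`. -/
noncomputable def cellIndex (r : ℝ) (x : EuclideanSpace ℝ ι) : ι → ℤ :=
  fun i => ⌊x i / r⌋

@[simp]
theorem latticePoint_apply (r : ℝ) (q : ι → ℤ) (i : ι) : latticePoint r q i = r * q i := rfl

theorem cellIndex_add_latticePoint {r : ℝ} (hr : r ≠ 0) (x : EuclideanSpace ℝ ι) (q : ι → ℤ) :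
    cellIndex r (x + latticePoint r q) = cellIndex r x + q := by
  ext i
  simp [cellIndex, add_div, mul_div_cancel_left₀ _ hr, Int.floor_add_intCast]

theorem mem_cellIndex_preimage_zero {r : ℝ} (hr : 0 < r) {x : EuclideanSpace ℝ ι} :
    x ∈ cellIndex r ⁻¹' {0} ↔ ∀ i, x i ∈ Ico 0 r := by
  simp [cellIndex, funext_iff, Int.floor_eq_zero_iff, le_div_iff₀ hr, div_lt_one hr]

theorem measurable_cellIndex (r : ℝ) : Measurable (cellIndex (ι := ι) r) :=
  measurable_pi_lambda _ fun i => Int.measurable_floor.comp (by fun_prop)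

variable [Fintype ι]

theorem volume_cellIndex_preimage_zero {r : ℝ} (hr : 0 < r) :
    volume (cellIndex r ⁻¹' {0} : Set (EuclideanSpace ℝ ι)) =
      ENNReal.ofReal r ^ Fintype.card ι := by
  have : (cellIndex r ⁻¹' {0} : Set (EuclideanSpace ℝ ι)) =
      (MeasurableEquiv.toLp 2 (ι → ℝ)).symm ⁻¹' univ.pi fun _ => Ico 0 r := by
    ext x; simp [mem_cellIndex_preimage_zero hr]
  rw [this, (EuclideanSpace.volume_preserving_symm_measurableEquiv_toLp ι).measure_preimage
    (MeasurableSet.univ_pi fun _ => measurableSet_Ico).nullMeasurableSet, volume_pi_pi]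
  simp

theorem setLIntegral_cell_sum_translate_le {r : ℝ} (hr : r ≠ 0) (L : Finset (ι → ℤ))
    {G : EuclideanSpace ℝ ι → ℝ≥0∞} (hG : Measurable G) :
    ∫⁻ s in cellIndex r ⁻¹' {0}, ∑ q ∈ L, G (s + latticePoint r q) ≤ ∫⁻ x, G x := by
  have hcell : ∀ q, MeasurableSet (cellIndex (ι := ι) r ⁻¹' {q}) :=
    fun q => measurable_cellIndex r (measurableSet_singleton q)
  have htranslate : ∀ q, ∫⁻ s in cellIndex r ⁻¹' {0}, G (s + latticePoint r q) =
      ∫⁻ x in cellIndex r ⁻¹' {q}, G x := fun q => by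
    have hpre : cellIndex r ⁻¹' {0} = (· + latticePoint r q) ⁻¹' (cellIndex r ⁻¹' {q}) := by
      ext s; simp [cellIndex_add_latticePoint hr]
    rw [hpre, (measurePreserving_add_right volume _).setLIntegral_comp_preimage (hcell q) hG]
  calc ∫⁻ s in cellIndex r ⁻¹' {0}, ∑ q ∈ L, G (s + latticePoint r q)
      = ∑ q ∈ L, ∫⁻ x in cellIndex r ⁻¹' {q}, G x := by
        rw [lintegral_finsetSum (f := fun q s => G (s + latticePoint r q)) _
          fun q _ => hG.comp (measurable_add_const _)]
        exact Finset.sum_congr rfl fun q _ => htranslate q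
    _ = ∫⁻ x in ⋃ q ∈ L, cellIndex r ⁻¹' {q}, G x :=
        (lintegral_biUnion_finset ((pairwiseDisjoint_fiber _ _).subset (subset_univ _))
          (fun q _ => hcell q) G).symm
    _ ≤ ∫⁻ x, G x := setLIntegral_le_lintegral _ _

theorem exists_mem_cell_sum_translate_le {r : ℝ} (hr : 0 < r) (L : Finset (ι → ℤ))
    {G : EuclideanSpace ℝ ι → ℝ≥0∞} (hG : Measurable G) :
    ∃ t ∈ cellIndex r ⁻¹' {0}, ∑ q ∈ L, G (t + latticePoint r q) ≤
      (ENNReal.ofReal r ^ Fintype.card ι)⁻¹ * ∫⁻ x, G x := by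
  have hvol := volume_cellIndex_preimage_zero (ι := ι) hr
  obtain ⟨t, ht, hle⟩ := exists_le_setLAverage (μ := volume) (s := cellIndex r ⁻¹' {0})
    (f := fun s => ∑ q ∈ L, G (s + latticePoint r q))
    (by simp [hvol, hr]) (by simp [hvol])
    (Finset.measurable_sum _ fun q _ => hG.comp (measurable_add_const _)).aemeasurable
  refine ⟨t, ht, hle.trans ?_⟩
  rw [setLAverage_eq, hvol, ENNReal.div_eq_inv_mul]
  exact mul_le_mul_of_nonneg_left (setLIntegral_cell_sum_translate_le hr.ne' L hG) zero_le

theorem le_dist_add_latticePoint {r : ℝ} (hr : 0 ≤ r) {q q' : ι → ℤ} (h : q ≠ q')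
    (t : EuclideanSpace ℝ ι) :
    r ≤ dist (t + latticePoint r q) (t + latticePoint r q') := by
  obtain ⟨i, hi⟩ := Function.ne_iff.1 h
  have hone : (1 : ℝ) ≤ |(q i : ℝ) - q' i| := by
    exact_mod_cast Int.one_le_abs (sub_ne_zero.2 hi)
  calc r ≤ r * |(q i : ℝ) - q' i| := le_mul_of_one_le_right hr hone
    _ = ‖(latticePoint r q - latticePoint r q') i‖ := by
        simp [← mul_sub, abs_of_nonneg hr]
    _ ≤ dist (t + latticePoint r q) (t + latticePoint r q') := by
        rw [dist_add_left, dist_eq_norm]; exact PiLp.norm_apply_le _ i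

/-- Rounding moves each coordinate by at most `r / 2`, and `card ι • (r / 2) ^ 2 < r ^ 2`. -/
theorem exists_dist_add_latticePoint_lt (hι : Fintype.card ι < 4) {r : ℝ} (hr : 0 < r)
    (t x : EuclideanSpace ℝ ι) :
    ∃ q : ι → ℤ, (∀ i, |(q i : ℝ)| ≤ |x i - t i| / r + 1 / 2) ∧
      dist x (t + latticePoint r q) < r := by
  set q : ι → ℤ := fun i => round ((x i - t i) / r)
  have hround : ∀ i, |(x i - t i) / r - q i| ≤ 1 / 2 := fun i => abs_sub_round _
  refine ⟨q, fun i => ?_, ?_⟩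
  · have := abs_sub_abs_le_abs_sub ((q i : ℝ)) ((x i - t i) / r)
    rw [abs_sub_comm, abs_div, abs_of_pos hr] at this
    linarith [hround i]
  · have hcoord : ∀ i, dist (x i) ((t + latticePoint r q) i) ^ 2 ≤ (r / 2) ^ 2 := fun i => by
      have : dist (x i) ((t + latticePoint r q) i) = r * |(x i - t i) / r - q i| := by
        rw [Real.dist_eq, ← abs_of_pos hr, ← abs_mul, abs_of_pos hr]
        congr 1
        simp only [PiLp.add_apply, latticePoint_apply]
        field_simp
        ring
      have hsq := pow_le_pow_left₀ (abs_nonneg _) (hround i) 2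
      rw [this, mul_pow]
      nlinarith [sq_nonneg r]
    rw [EuclideanSpace.dist_eq, Real.sqrt_lt' hr]
    calc ∑ i, dist (x i) ((t + latticePoint r q) i) ^ 2 ≤ Fintype.card ι • (r / 2) ^ 2 :=
          Finset.sum_le_card_nsmul _ _ _ fun i _ => hcoord i
      _ < r ^ 2 := by
        rw [nsmul_eq_mul]
        have : (Fintype.card ι : ℝ) < 4 := by exact_mod_cast hι
        nlinarith [sq_pos_of_pos hr]

theorem ball_subset_iUnion_ball_add_latticePoint [DecidableEq ι] (hι : Fintype.card ι < 4)
    {r : ℝ} (hr : 0 < r) {t : EuclideanSpace ℝ ι} (ht : t ∈ cellIndex r ⁻¹' {0}) (R : ℝ) :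
    ball 0 R ⊆ ⋃ q ∈ Fintype.piFinset fun _ : ι => Finset.Icc (-(⌈R / r⌉ + 2)) (⌈R / r⌉ + 2),
      ball (t + latticePoint r q) r := by
  intro x hx
  obtain ⟨q, hq, hdist⟩ := exists_dist_add_latticePoint_lt hι hr t x
  refine mem_iUnion₂.2 ⟨q, Fintype.mem_piFinset.2 fun i => ?_, hdist⟩
  have hx : |x i| < R := (PiLp.norm_apply_le x i).trans_lt (mem_ball_zero_iff.1 hx)
  have ht : t i ∈ Ico 0 r := (mem_cellIndex_preimage_zero hr).1 ht i
  have hqi : |(q i : ℝ)| < ⌈R / r⌉ + 2 := by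
    calc |(q i : ℝ)| ≤ |x i - t i| / r + 1 / 2 := hq i
      _ < R / r + 3 / 2 := by
        rw [div_add' _ _ _ hr.ne', div_add' _ _ _ hr.ne', div_lt_div_iff_of_pos_right hr]
        linarith [abs_sub (x i) (t i), abs_of_nonneg ht.1, ht.2]
      _ ≤ ⌈R / r⌉ + 2 := by linarith [Int.le_ceil (R / r)]
  rw [Finset.mem_Icc, ← abs_le]
  exact_mod_cast hqi.le

end Lattice

section PlaneCircle

local notation "ℝ²" => EuclideanSpace ℝ (Fin 2)

noncomputable def planeCircleMap (c : ℝ²) (r θ : ℝ) : ℝ² :=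
  Complex.orthonormalBasisOneI.repr (circleMap (Complex.orthonormalBasisOneI.repr.symm c) r θ)

theorem lipschitzWith_planeCircleMap (c : ℝ²) (r : ℝ) :
    LipschitzWith (nnabs r) (planeCircleMap c r) := by
  have h := Complex.orthonormalBasisOneI.repr.lipschitz.comp
    (lipschitzWith_circleMap (Complex.orthonormalBasisOneI.repr.symm c) r)
  rwa [one_mul] at h

theorem image_planeCircleMap_Ioc (c : ℝ²) (r : ℝ) :
    planeCircleMap c r '' Ioc 0 (2 * π) = sphere c |r| := by
  rw [show planeCircleMap c r = Complex.orthonormalBasisOneI.repr ∘ circleMap _ r from rfl,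
    Set.image_comp, image_circleMap_Ioc, LinearIsometryEquiv.image_sphere,
    LinearIsometryEquiv.apply_symm_apply]

theorem planeCircleMap_eq_add (c : ℝ²) (r θ : ℝ) :
    planeCircleMap c r θ = c + planeCircleMap 0 r θ := by
  rw [planeCircleMap, planeCircleMap, map_zero, ← circleMap_sub_center, map_sub,
    LinearIsometryEquiv.apply_symm_apply, add_sub_cancel]

theorem setLIntegral_sphere_le (c : ℝ²) {r : ℝ} (hr : 0 ≤ r) (g : ℝ² → ℝ≥0∞) :
    ∫⁻ x in sphere c r, g x ∂μH[1] ≤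
      ENNReal.ofReal r * ∫⁻ θ in Ioc 0 (2 * π), g (c + planeCircleMap 0 r θ) := by
  have hS : sphere c r ⊆ planeCircleMap c r '' Ioc 0 (2 * π) := by
    rw [image_planeCircleMap_Ioc, abs_of_nonneg hr]
  have h := setLIntegral_hausdorffMeasure_one_le_of_subset_image
    (lipschitzWith_planeCircleMap c r) hS g
  simp only [planeCircleMap_eq_add c r] at h
  rwa [← Real.enorm_eq_ofReal hr]

theorem measurable_lintegral_add_planeCircleMap {g : ℝ² → ℝ≥0∞} (hg : Measurable g) (r : ℝ)
    (I : Set ℝ) : Measurable fun c => ∫⁻ θ in I, g (c + planeCircleMap 0 r θ) :=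
  (hg.comp (measurable_fst.add ((lipschitzWith_planeCircleMap 0 r).continuous.measurable.comp
    measurable_snd))).lintegral_prod_right'

theorem lintegral_lintegral_add_planeCircleMap {g : ℝ² → ℝ≥0∞} (hg : Measurable g) (r : ℝ) :
    ∫⁻ c, ∫⁻ θ in Ioc 0 (2 * π), g (c + planeCircleMap 0 r θ) =
      ENNReal.ofReal (2 * π) * ∫⁻ x, g x := by
  simpa using lintegral_lintegral_add_comp (μ := volume.restrict (Ioc 0 (2 * π)))
    (lipschitzWith_planeCircleMap 0 r).continuous.measurable hg

theorem setLIntegral_sphere_normal_flux_le {V : ℝ² → ℝ²} {p : ℝ} (hp : 0 ≤ p) (c : ℝ²) {r : ℝ}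
    (hr : 0 ≤ r) :
    ∫⁻ x in sphere c r, ENNReal.ofReal (|⟪V x, r⁻¹ • (x - c)⟫| ^ p) ∂μH[1] ≤
      ENNReal.ofReal r *
        ∫⁻ θ in Ioc 0 (2 * π), ENNReal.ofReal (‖V (c + planeCircleMap 0 r θ)‖ ^ p) :=
  (setLIntegral_mono' isClosed_sphere.measurableSet fun _ hx =>
    ENNReal.ofReal_le_ofReal (abs_inner_smul_sub_rpow_le_norm_rpow hp hx _)).trans
    (setLIntegral_sphere_le c hr _)

end PlaneCircle

/-- For every `1 ≤ p < ∞` there is `C = C(p) > 0` such that: for every Borel measurable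
`V : ℝ² → ℝ²` vanishing outside the open unit ball, with `∫‖V‖^p < ∞`, and every
`0 < r ≤ 1`, there are finitely many balls of radius `r` covering the unit ball, whose
half-radius concentric balls are pairwise disjoint, and such that the total `p`-flux
energy through the boundary circles is at most `C r⁻¹ ∫‖V‖^p`. -/
theorem good_covering_exists (p : ℝ) (hp : 1 ≤ p) :
    ∃ C : ℝ, 0 < C ∧
      ∀ (V : EuclideanSpace ℝ (Fin 2) → EuclideanSpace ℝ (Fin 2)),
        Measurable V →
        (∀ x, x ∉ ball (0 : EuclideanSpace ℝ (Fin 2)) 1 → V x = 0) →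
        (∫⁻ x, ENNReal.ofReal (‖V x‖ ^ p) ∂volume) < ⊤ →
        ∀ r : ℝ, 0 < r → r ≤ 1 →
        ∃ (N : ℕ) (y : Fin N → EuclideanSpace ℝ (Fin 2)),
          (ball (0 : EuclideanSpace ℝ (Fin 2)) 1 ⊆ ⋃ i, ball (y i) r) ∧
          (∀ i j : Fin N, i ≠ j → Disjoint (ball (y i) (r / 2)) (ball (y j) (r / 2))) ∧
          (∑ i : Fin N, ∫⁻ x in sphere (y i) r,
              ENNReal.ofReal (|⟪V x, r⁻¹ • (x - y i)⟫| ^ p) ∂μH[1])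
            ≤ ENNReal.ofReal (C * r⁻¹) * ∫⁻ x, ENNReal.ofReal (‖V x‖ ^ p) ∂volume := by
  refine ⟨2 * π, by positivity, fun V hV _ _ r hr _ => ?_⟩
  have hp0 : 0 ≤ p := by linarith
  have hg : Measurable fun x => ENNReal.ofReal (‖V x‖ ^ p) := by fun_prop
  set L := Fintype.piFinset fun _ : Fin 2 => Finset.Icc (-(⌈1 / r⌉ + 2)) (⌈1 / r⌉ + 2)
  obtain ⟨t, ht, hsum⟩ :=
    exists_mem_cell_sum_translate_le hr L (measurable_lintegral_add_planeCircleMap hg r _)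
  rw [lintegral_lintegral_add_planeCircleMap hg r, Fintype.card_fin] at hsum
  refine ⟨L.card, fun i => t + latticePoint r (L.equivFin.symm i), ?_, fun i j hij => ?_, ?_⟩
  · refine (ball_subset_iUnion_ball_add_latticePoint (by simp) hr ht 1).trans fun _ hx => ?_
    obtain ⟨q, hq, hxq⟩ := mem_iUnion₂.1 hx
    exact mem_iUnion.2 ⟨L.equivFin ⟨q, hq⟩, by simpa using hxq⟩
  · have hne : (L.equivFin.symm i : Fin 2 → ℤ) ≠ L.equivFin.symm j :=
      fun h => hij (L.equivFin.symm.injective (Subtype.ext h))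
    exact ball_disjoint_ball (by linarith [le_dist_add_latticePoint hr.le hne t])
  · calc _ ≤ ∑ i, ENNReal.ofReal r * ∫⁻ θ in Ioc 0 (2 * π), ENNReal.ofReal
            (‖V (t + latticePoint r (L.equivFin.symm i) + planeCircleMap 0 r θ)‖ ^ p) :=
          Finset.sum_le_sum fun i _ => by exact setLIntegral_sphere_normal_flux_le hp0 _ hr.le
      _ = ENNReal.ofReal r * ∑ q ∈ L, ∫⁻ θ in Ioc 0 (2 * π),
            ENNReal.ofReal (‖V (t + latticePoint r q + planeCircleMap 0 r θ)‖ ^ p) := by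
          rw [← Finset.mul_sum, ← Finset.sum_coe_sort L]
          exact congrArg _ (Fintype.sum_equiv L.equivFin.symm _ _ fun _ => rfl)
      _ ≤ ENNReal.ofReal r * ((ENNReal.ofReal r ^ 2)⁻¹ *
            (ENNReal.ofReal (2 * π) * ∫⁻ x, ENNReal.ofReal (‖V x‖ ^ p))) := by gcongr
      _ = ENNReal.ofReal (2 * π * r⁻¹) * ∫⁻ x, ENNReal.ofReal (‖V x‖ ^ p) := by
          rw [← ENNReal.ofReal_pow hr.le, ← ENNReal.ofReal_inv_of_pos (by positivity), ← mul_assoc,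
            ← mul_assoc, ← ENNReal.ofReal_mul hr.le, ← ENNReal.ofReal_mul (by positivity)]
          congr 2
          field_simp
end

section
/- Let 1 ≤ p < ∞, let C ∈ ℕ, and let V : ℝ² → ℝ² be measurable with ∫_{ℝ²} ‖V‖^p dx < ∞. For each n ∈ ℕ let 𝓑_n be a finite family of open balls in ℝ² whose union contains the open unit ball B², such that no point of ℝ² belongs to more than C balls of 𝓑_n, and such that max_{B ∈ 𝓑_n} diam(B) → 0 as n → ∞. Then ∑_{B ∈ 𝓑_n} ∫_B ‖V(x) − V̄_B‖^p dx → 0 as n → ∞, where V̄_B = (1/|B|)∫_B V dx denotes the average of V over B (with |B| the Lebesgue measure of B). -/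
/-!
Approximate `V` in `Lᵖ` by a continuous compactly supported `g`, and split `V = g + (V - g)`
using `(a + b)ᵖ ≤ 2ᵖ⁻¹ (aᵖ + bᵖ)`.  By Jensen, the deviation of `V - g` on a ball is at most
`2ᵖ ∫_B ‖V - g‖ᵖ`, so by the overlap bound its sum over `𝓑 n` is at most `2ᵖ C ‖V - g‖ₚᵖ`,
uniformly in `n`.  Since `g` is uniformly continuous, once the diameters are small its deviation
on a ball `B` is at most `εᵖ |B|`, and vanishes unless `B` lies in the `1`-neighbourhood `A` of
`supp g`; by the overlap bound again the sum for `g` is at most `C εᵖ |A|`.  Hence the limsup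
of the sums is at most `2²ᵖ⁻¹ C ‖V - g‖ₚᵖ`, which is arbitrarily small.
-/

open MeasureTheory Metric Real Filter

open scoped ENNReal Topology

section Deviation

variable {α E : Type*} [MeasurableSpace α] [NormedAddCommGroup E] [NormedSpace ℝ E]
  {μ : Measure α} {p : ℝ} {f g : α → E} {s : Set α}

noncomputable def deviationFromAverage (μ : Measure α) (p : ℝ) (f : α → E) (s : Set α) : ℝ≥0∞ :=
  ∫⁻ x in s, ‖f x - ⨍ y in s, f y ∂μ‖ₑ ^ p ∂μ

theorem integral_norm_sub_rpow_eq_toReal_deviationFromAverage (hp : 0 ≤ p)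
    (hf : AEStronglyMeasurable f (μ.restrict s)) :
    ∫ x in s, ‖f x - (μ s).toReal⁻¹ • ∫ y in s, f y ∂μ‖ ^ p ∂μ
      = (deviationFromAverage μ p f s).toReal := by
  rw [deviationFromAverage, setAverage_eq, measureReal_def,
    integral_eq_lintegral_of_nonneg_ae (.of_forall fun _ => by positivity) (by fun_prop)]
  congr 1
  refine lintegral_congr fun x => ?_
  rw [← ofReal_norm, ENNReal.ofReal_rpow_of_nonneg (norm_nonneg _) hp]

theorem measure_mul_enorm_setAverage_rpow_le (hp : 1 ≤ p)
    (hf : AEStronglyMeasurable f (μ.restrict s)) :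
    μ s * ‖⨍ x in s, f x ∂μ‖ₑ ^ p ≤ ∫⁻ x in s, ‖f x‖ₑ ^ p ∂μ := by
  -- the normalized restriction; its mass is `0` rather than `1` when `μ s ∈ {0, ∞}`
  set ν := (μ s)⁻¹ • μ.restrict s
  have hp0 : 0 < p := by linarith
  have hν : ν Set.univ ≤ 1 := by simp [ν, ENNReal.inv_mul_le_one]
  have hHolder : ∫⁻ x, ‖f x‖ₑ ∂ν ≤ (∫⁻ x, ‖f x‖ₑ ^ p ∂ν) ^ p⁻¹ := by
    have := ENNReal.lintegral_mul_norm_pow_le (μ := ν) ((hf.smul_measure _).enorm.pow_const p)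
      aemeasurable_const (inv_nonneg.2 hp0.le) (sub_nonneg.2 (inv_le_one_of_one_le₀ hp))
      (add_sub_cancel _ 1) (g := fun _ => 1)
    simp only [← ENNReal.rpow_mul, mul_inv_cancel₀ hp0.ne', ENNReal.rpow_one, ENNReal.one_rpow,
      mul_one, lintegral_const, one_mul] at this
    refine this.trans (mul_le_of_le_one_right' ?_)
    exact ENNReal.rpow_le_one hν (sub_nonneg.2 (inv_le_one_of_one_le₀ hp))
  calc μ s * ‖⨍ x in s, f x ∂μ‖ₑ ^ p ≤ μ s * (∫⁻ x, ‖f x‖ₑ ∂ν) ^ p := by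
        rw [setAverage_eq']
        gcongr
        exact enorm_integral_le_lintegral_enorm _
    _ ≤ μ s * ∫⁻ x, ‖f x‖ₑ ^ p ∂ν := by
        gcongr
        simpa [← ENNReal.rpow_mul, inv_mul_cancel₀ hp0.ne'] using
          ENNReal.rpow_le_rpow hHolder hp0.le
    _ ≤ ∫⁻ x in s, ‖f x‖ₑ ^ p ∂μ := by
        rw [lintegral_smul_measure, smul_eq_mul, ← mul_assoc]
        exact mul_le_of_le_one_left' (ENNReal.mul_inv_le_one _)

theorem deviationFromAverage_le (hp : 1 ≤ p) (hf : AEStronglyMeasurable f (μ.restrict s)) :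
    deviationFromAverage μ p f s ≤ 2 ^ p * ∫⁻ x in s, ‖f x‖ₑ ^ p ∂μ := by
  set c := ⨍ y in s, f y ∂μ
  have hpointwise : ∀ x, ‖f x - c‖ₑ ^ p ≤ 2 ^ (p - 1) * (‖f x‖ₑ ^ p + ‖c‖ₑ ^ p) := fun x =>
    (ENNReal.rpow_le_rpow (enorm_sub_le) (by linarith)).trans
      (ENNReal.rpow_add_le_mul_rpow_add_rpow _ _ hp)
  calc deviationFromAverage μ p f s
      ≤ ∫⁻ x in s, 2 ^ (p - 1) * (‖f x‖ₑ ^ p + ‖c‖ₑ ^ p) ∂μ := lintegral_mono hpointwise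
    _ = 2 ^ (p - 1) * (∫⁻ x in s, ‖f x‖ₑ ^ p ∂μ + μ s * ‖c‖ₑ ^ p) := by
        rw [lintegral_const_mul' _ _ (by simp), lintegral_add_right _ measurable_const,
          setLIntegral_const, mul_comm (‖c‖ₑ ^ p)]
    _ ≤ 2 ^ (p - 1) * (∫⁻ x in s, ‖f x‖ₑ ^ p ∂μ + ∫⁻ x in s, ‖f x‖ₑ ^ p ∂μ) := by
        gcongr
        exact measure_mul_enorm_setAverage_rpow_le hp hf
    _ = 2 ^ p * ∫⁻ x in s, ‖f x‖ₑ ^ p ∂μ := by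
        have h2 : (2 : ℝ≥0∞) ^ (p - 1) * 2 = 2 ^ p := by
          simpa using (ENNReal.rpow_add (p - 1) 1 two_ne_zero ENNReal.ofNat_ne_top).symm
        rw [← two_mul, ← mul_assoc, h2]

theorem deviationFromAverage_add_le (hp : 1 ≤ p) (hf : IntegrableOn f s μ)
    (hg : IntegrableOn g s μ) :
    deviationFromAverage μ p (f + g) s
      ≤ 2 ^ (p - 1) * (deviationFromAverage μ p f s + deviationFromAverage μ p g s) := by
  have havg : ⨍ y in s, (f + g) y ∂μ = (⨍ y in s, f y ∂μ) + ⨍ y in s, g y ∂μ := by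
    simp only [setAverage_eq, Pi.add_apply, integral_add hf hg, smul_add]
  have hf_meas := hf.aestronglyMeasurable
  calc deviationFromAverage μ p (f + g) s
      ≤ ∫⁻ x in s, 2 ^ (p - 1) * (‖f x - ⨍ y in s, f y ∂μ‖ₑ ^ p
          + ‖g x - ⨍ y in s, g y ∂μ‖ₑ ^ p) ∂μ := by
        refine lintegral_mono fun x => ?_
        rw [havg, Pi.add_apply, add_sub_add_comm]
        exact (ENNReal.rpow_le_rpow (enorm_add_le _ _) (by linarith)).trans
          (ENNReal.rpow_add_le_mul_rpow_add_rpow _ _ hp)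
    _ = _ := by
        rw [lintegral_const_mul' _ _ (by simp), deviationFromAverage, deviationFromAverage,
          lintegral_add_left' (by fun_prop)]

theorem deviationFromAverage_le_mul_measure_inter_cthickening [PseudoMetricSpace α]
    [CompleteSpace E] (hp : 0 < p)
    (hs : MeasurableSet s) (hμs : μ s ≠ ∞) (hg : IntegrableOn g s μ) {r ε : ℝ}
    (hdist : ∀ x ∈ s, ∀ y ∈ s, dist x y ≤ r) (hosc : ∀ x ∈ s, ∀ y ∈ s, ‖g x - g y‖ ≤ ε) :
    deviationFromAverage μ p g s ≤ ENNReal.ofReal ε ^ p * μ (cthickening r (tsupport g) ∩ s) := by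
  rcases eq_or_ne (μ s) 0 with hμ0 | hμ0
  · simp [deviationFromAverage, setLIntegral_measure_zero _ _ hμ0]
  by_cases hmeet : (s ∩ tsupport g).Nonempty
  · obtain ⟨z, hzs, hzg⟩ := hmeet
    have hsub : s ⊆ cthickening r (tsupport g) := fun x hx =>
      mem_cthickening_of_dist_le x z r _ hzg (hdist x hx z hzs)
    have hclose : ∀ x ∈ s, ‖g x - ⨍ y in s, g y ∂μ‖ ≤ ε := fun x hx => by
      rw [← dist_eq_norm, ← mem_closedBall']
      exact (convex_closedBall _ _).set_average_mem isClosed_closedBall hμ0 hμs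
        ((ae_restrict_mem hs).mono fun y hy => by
          rw [mem_closedBall', dist_eq_norm]
          exact hosc x hx y hy) hg
    rw [Set.inter_eq_right.2 hsub, ← setLIntegral_const]
    refine setLIntegral_mono' hs fun x hx => ?_
    gcongr
    rw [← ofReal_norm]
    exact ENNReal.ofReal_le_ofReal (hclose x hx)
  · have hg0 : ∀ x ∈ s, g x = 0 := fun x hx => by
      by_contra h
      exact hmeet ⟨x, hx, subset_tsupport _ h⟩
    have hzero : deviationFromAverage μ p g s = 0 := by
      rw [deviationFromAverage, setAverage_eq, setIntegral_eq_zero_of_forall_eq_zero hg0,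
        smul_zero]
      exact (setLIntegral_congr_fun hs fun x hx => by simp [hg0 x hx, hp]).trans lintegral_zero
    simp [hzero]

end Deviation

section Sum

variable {α E ι : Type*} [MeasurableSpace α] [NormedAddCommGroup E] [NormedSpace ℝ E]
  {μ : Measure α} {p : ℝ}

theorem sum_setLIntegral_le_mul_lintegral {ι : Type*} {t : Finset ι} {U : ι → Set α}
    (hU : ∀ i ∈ t, MeasurableSet (U i)) {C : ℕ} (hC : ∀ x, {i | i ∈ t ∧ x ∈ U i}.ncard ≤ C)
    {F : α → ℝ≥0∞} (hF : AEMeasurable F μ) :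
    ∑ i ∈ t, ∫⁻ x in U i, F x ∂μ ≤ C * ∫⁻ x, F x ∂μ := by
  classical
  have hcount : ∀ x, ∑ i ∈ t, (U i).indicator F x ≤ C * F x := fun x => by
    rw [Finset.sum_indicator_eq_sum_filter t (fun _ => F) U (fun _ => x), Finset.sum_const,
      nsmul_eq_mul]
    gcongr
    have := hC x
    rwa [← Set.ncard_coe_finset, Finset.coe_filter]
  calc ∑ i ∈ t, ∫⁻ x in U i, F x ∂μ = ∫⁻ x, ∑ i ∈ t, (U i).indicator F x ∂μ := by
        rw [lintegral_finsetSum' _ fun i hi => hF.indicator (hU i hi)]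
        exact Finset.sum_congr rfl fun i hi => (lintegral_indicator (hU i hi) F).symm
    _ ≤ ∫⁻ x, C * F x ∂μ := lintegral_mono hcount
    _ = C * ∫⁻ x, F x ∂μ := lintegral_const_mul'' _ hF

theorem sum_deviationFromAverage_le_mul_lintegral {t : Finset ι} {U : ι → Set α}
    (hU : ∀ i ∈ t, MeasurableSet (U i)) {C : ℕ} (hC : ∀ x, {i | i ∈ t ∧ x ∈ U i}.ncard ≤ C)
    (hp : 1 ≤ p) {f : α → E} (hf : AEStronglyMeasurable f μ) :
    ∑ i ∈ t, deviationFromAverage μ p f (U i) ≤ 2 ^ p * C * ∫⁻ x, ‖f x‖ₑ ^ p ∂μ := by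
  calc ∑ i ∈ t, deviationFromAverage μ p f (U i)
      ≤ ∑ i ∈ t, 2 ^ p * ∫⁻ x in U i, ‖f x‖ₑ ^ p ∂μ :=
        Finset.sum_le_sum fun i _ => deviationFromAverage_le hp hf.restrict
    _ ≤ 2 ^ p * (C * ∫⁻ x, ‖f x‖ₑ ^ p ∂μ) := by
        rw [← Finset.mul_sum]
        gcongr
        exact sum_setLIntegral_le_mul_lintegral hU hC (hf.enorm.pow_const p)
    _ = 2 ^ p * C * ∫⁻ x, ‖f x‖ₑ ^ p ∂μ := (mul_assoc _ _ _).symm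

theorem sum_deviationFromAverage_le_add_mul_lintegral_sub {t : Finset ι} {U : ι → Set α}
    (hU : ∀ i ∈ t, MeasurableSet (U i)) {C : ℕ} (hC : ∀ x, {i | i ∈ t ∧ x ∈ U i}.ncard ≤ C)
    (hp : 1 ≤ p) {f g : α → E} (hf : ∀ i ∈ t, IntegrableOn f (U i) μ)
    (hg : ∀ i ∈ t, IntegrableOn g (U i) μ) (hfg : AEStronglyMeasurable (f - g) μ) :
    ∑ i ∈ t, deviationFromAverage μ p f (U i)
      ≤ 2 ^ (p - 1) * ∑ i ∈ t, deviationFromAverage μ p g (U i)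
        + 2 ^ (p - 1) * (2 ^ p * C) * ∫⁻ x, ‖f x - g x‖ₑ ^ p ∂μ := by
  calc ∑ i ∈ t, deviationFromAverage μ p f (U i)
      ≤ ∑ i ∈ t, 2 ^ (p - 1) * (deviationFromAverage μ p g (U i)
          + deviationFromAverage μ p (f - g) (U i)) :=
        Finset.sum_le_sum fun i hi => by
          simpa using deviationFromAverage_add_le hp (hg i hi) ((hf i hi).sub (hg i hi))
    _ = 2 ^ (p - 1) * ∑ i ∈ t, deviationFromAverage μ p g (U i)
          + 2 ^ (p - 1) * ∑ i ∈ t, deviationFromAverage μ p (f - g) (U i) := by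
        rw [← Finset.mul_sum, Finset.sum_add_distrib, mul_add]
    _ ≤ 2 ^ (p - 1) * ∑ i ∈ t, deviationFromAverage μ p g (U i)
          + 2 ^ (p - 1) * (2 ^ p * C) * ∫⁻ x, ‖f x - g x‖ₑ ^ p ∂μ := by
        rw [mul_assoc (2 ^ (p - 1))]
        gcongr
        exact sum_deviationFromAverage_le_mul_lintegral hU hC hp hfg

end Sum

section ProperSpace

variable {α E : Type*} [PseudoMetricSpace α] [ProperSpace α] [MeasurableSpace α]
  [OpensMeasurableSpace α] {μ : Measure α} [IsFiniteMeasureOnCompacts μ]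
  [NormedAddCommGroup E] [NormedSpace ℝ E] [CompleteSpace E] {p : ℝ}

theorem tendsto_sum_deviationFromAverage_ball_of_hasCompactSupport (hp : 0 < p) {g : α → E}
    (hg : Continuous g) (hgc : HasCompactSupport g) {𝓑 : ℕ → Finset (α × ℝ)} {C : ℕ}
    (hoverlap : ∀ n x, {b | b ∈ 𝓑 n ∧ x ∈ ball b.1 b.2}.ncard ≤ C)
    (hdiam : ∀ δ : ℝ, 0 < δ → ∃ n₀ : ℕ, ∀ n ≥ n₀, ∀ b ∈ 𝓑 n, diam (ball b.1 b.2) ≤ δ) :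
    Tendsto (fun n => ∑ b ∈ 𝓑 n, deviationFromAverage μ p g (ball b.1 b.2)) atTop (𝓝 0) := by
  set A := cthickening 1 (tsupport g)
  have hA : MeasurableSet A := isClosed_cthickening.measurableSet
  have hμA : μ A ≠ ∞ := hgc.isCompact.cthickening.measure_lt_top.ne
  have hsmall : Tendsto (fun ε => C * (ENNReal.ofReal ε ^ p * μ A)) (𝓝[>] 0) (𝓝 0) := by
    have hpow : Tendsto (fun ε => ENNReal.ofReal ε ^ p) (𝓝 0) (𝓝 0) := by
      simpa [hp, Function.comp_def] using
        (((ENNReal.continuous_rpow_const (y := p)).comp ENNReal.continuous_ofReal).tendsto 0)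
    simpa using (ENNReal.Tendsto.const_mul (ENNReal.Tendsto.mul_const hpow (Or.inr hμA))
      (Or.inr (ENNReal.natCast_ne_top C))).mono_left nhdsWithin_le_nhds
  refine ENNReal.tendsto_nhds_zero.2 fun τ hτ => ?_
  obtain ⟨ε, hετ, hε⟩ := ((hsmall.eventually (eventually_le_nhds hτ)).and
    self_mem_nhdsWithin).exists
  obtain ⟨δ, hδ, hgδ⟩ :=
    Metric.uniformContinuous_iff.1 (hgc.uniformContinuous_of_continuous hg) ε hε
  obtain ⟨n₀, hn₀⟩ := hdiam (min δ 1 / 2) (by positivity)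
  filter_upwards [eventually_ge_atTop n₀] with n hn
  have hball : ∀ b ∈ 𝓑 n, deviationFromAverage μ p g (ball b.1 b.2)
      ≤ ENNReal.ofReal ε ^ p * μ (A ∩ ball b.1 b.2) := fun b hb => by
    have hdist : ∀ x ∈ ball b.1 b.2, ∀ y ∈ ball b.1 b.2, dist x y ≤ min δ 1 / 2 :=
      fun x hx y hy => (dist_le_diam_of_mem isBounded_ball hx hy).trans (hn₀ n hn b hb)
    refine deviationFromAverage_le_mul_measure_inter_cthickening hp measurableSet_ball
      measure_ball_lt_top.ne (hg.integrable_of_hasCompactSupport hgc).integrableOn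
      (fun x hx y hy => (hdist x hx y hy).trans (by linarith [min_le_right δ 1]))
      (fun x hx y hy => ?_)
    rw [← dist_eq_norm]
    exact (hgδ ((hdist x hx y hy).trans_lt (by linarith [min_le_left δ 1]))).le
  calc ∑ b ∈ 𝓑 n, deviationFromAverage μ p g (ball b.1 b.2)
      ≤ ∑ b ∈ 𝓑 n, ∫⁻ x in ball b.1 b.2, A.indicator (fun _ => ENNReal.ofReal ε ^ p) x ∂μ :=
        Finset.sum_le_sum fun b hb => by
          rw [lintegral_indicator_const hA, Measure.restrict_apply hA]
          exact hball b hb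
    _ ≤ C * ∫⁻ x, A.indicator (fun _ => ENNReal.ofReal ε ^ p) x ∂μ :=
        sum_setLIntegral_le_mul_lintegral (fun _ _ => measurableSet_ball) (hoverlap n)
          (aemeasurable_const.indicator hA)
    _ = C * (ENNReal.ofReal ε ^ p * μ A) := by rw [lintegral_indicator_const hA]
    _ ≤ τ := hετ

end ProperSpace

theorem tendsto_nhds_zero_of_forall_eventually_le_add_mul {ι : Type*} {l : Filter ι}
    {a : ι → ℝ≥0∞} {K : ℝ≥0∞} (hK : K ≠ ∞)
    (h : ∀ τ > 0, ∃ b : ι → ℝ≥0∞, Tendsto b l (𝓝 0) ∧ ∀ᶠ i in l, a i ≤ b i + K * τ) :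
    Tendsto a l (𝓝 0) := by
  refine ENNReal.tendsto_nhds_zero.2 fun ε hε => ?_
  obtain ⟨b, hb, hab⟩ := h (ε / 2 / K) (ENNReal.div_pos (ENNReal.half_pos hε.ne').ne' hK)
  filter_upwards [hab, ENNReal.tendsto_nhds_zero.1 hb (ε / 2) (ENNReal.half_pos hε.ne')]
    with i hai hbi
  calc a i ≤ ε / 2 + ε / 2 := hai.trans (add_le_add hbi ENNReal.mul_div_le)
    _ = ε := ENNReal.add_halves ε

theorem tendsto_sum_toReal_of_tendsto_sum {ι κ : Type*} {l : Filter ι} {t : ι → Finset κ}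
    {a : ι → κ → ℝ≥0∞} (h : Tendsto (fun i => ∑ k ∈ t i, a i k) l (𝓝 0)) :
    Tendsto (fun i => ∑ k ∈ t i, (a i k).toReal) l (𝓝 0) := by
  have hfin : ∀ᶠ i in l, ∑ k ∈ t i, a i k ≠ ∞ := h.eventually_ne ENNReal.zero_ne_top
  refine ((ENNReal.tendsto_toReal ENNReal.zero_ne_top).comp h).congr' ?_
  filter_upwards [hfin] with i hi
  exact ENNReal.toReal_sum (ENNReal.sum_ne_top.1 hi)

section Lp

variable {α E : Type*} [MeasurableSpace α] [NormedAddCommGroup E] {μ : Measure α} {p : ℝ}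
  {f : α → E}

theorem memLp_ofReal_of_lintegral_ofReal_rpow_lt_top (hp : 0 < p)
    (hf : AEStronglyMeasurable f μ) (h : ∫⁻ x, ENNReal.ofReal (‖f x‖ ^ p) ∂μ < ∞) :
    MemLp f (ENNReal.ofReal p) μ := by
  refine ⟨hf, (eLpNorm_lt_top_iff_lintegral_rpow_enorm_lt_top (by simpa using hp)
    ENNReal.ofReal_ne_top).2 ?_⟩
  rw [ENNReal.toReal_ofReal hp.le]
  refine lt_of_eq_of_lt (lintegral_congr fun x => ?_) h
  rw [← ofReal_norm, ENNReal.ofReal_rpow_of_nonneg (norm_nonneg _) hp.le]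

theorem MeasureTheory.MemLp.exists_hasCompactSupport_lintegral_rpow_sub_le [TopologicalSpace α]
    [NormalSpace α] [BorelSpace α] [R1Space α] [WeaklyLocallyCompactSpace α] [μ.Regular]
    [NormedSpace ℝ E] (hp : 0 < p)
    (hf : MemLp f (ENNReal.ofReal p) μ) {τ : ℝ≥0∞} (hτ : τ ≠ 0) :
    ∃ g : α → E, Continuous g ∧ HasCompactSupport g ∧ ∫⁻ x, ‖f x - g x‖ₑ ^ p ∂μ ≤ τ := by
  obtain ⟨g, hgc, hfg, hg, -⟩ := hf.exists_hasCompactSupport_eLpNorm_sub_le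
    ENNReal.ofReal_ne_top (ε := τ ^ p⁻¹) (by simp [hτ, hp.le])
  refine ⟨g, hg, hgc, ?_⟩
  calc ∫⁻ x, ‖f x - g x‖ₑ ^ p ∂μ = eLpNorm (f - g) (ENNReal.ofReal p) μ ^ p := by
        rw [eLpNorm_eq_eLpNorm' (by simpa using hp) ENNReal.ofReal_ne_top,
          ENNReal.toReal_ofReal hp.le, ← lintegral_rpow_enorm_eq_rpow_eLpNorm' hp]
        rfl
    _ ≤ (τ ^ p⁻¹) ^ p := by gcongr
    _ = τ := by rw [← ENNReal.rpow_mul, inv_mul_cancel₀ hp.ne', ENNReal.rpow_one]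

end Lp

theorem sum_deviation_from_average_tendsto_zero_general (p : ℝ) (hp : 1 ≤ p) (C : ℕ)
    (V : EuclideanSpace ℝ (Fin 2) → EuclideanSpace ℝ (Fin 2))
    (hVmeas : Measurable V)
    (hVLp : ∫⁻ x, ENNReal.ofReal (‖V x‖ ^ p) ∂volume < ⊤)
    (𝓑 : ℕ → Finset (EuclideanSpace ℝ (Fin 2) × ℝ))
    (hoverlap : ∀ n, ∀ x : EuclideanSpace ℝ (Fin 2),
      ({b | b ∈ 𝓑 n ∧ x ∈ ball b.1 b.2} :
        Set (EuclideanSpace ℝ (Fin 2) × ℝ)).ncard ≤ C)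
    (hdiam : ∀ δ : ℝ, 0 < δ → ∃ n₀ : ℕ, ∀ n ≥ n₀, ∀ b ∈ 𝓑 n,
      Metric.diam (ball b.1 b.2) ≤ δ) :
    Tendsto (fun n => ∑ b ∈ 𝓑 n,
        ∫ x in ball b.1 b.2,
          ‖V x - (volume (ball b.1 b.2)).toReal⁻¹ • (∫ y in ball b.1 b.2, V y)‖ ^ p)
      atTop (nhds 0) := by
  have hp0 : 0 < p := by linarith
  have hV := memLp_ofReal_of_lintegral_ofReal_rpow_lt_top hp0 hVmeas.aestronglyMeasurable hVLp
  have hVball : ∀ b : EuclideanSpace ℝ (Fin 2) × ℝ, IntegrableOn V (ball b.1 b.2) :=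
    fun b => ((hV.locallyIntegrable (by simpa using hp)).integrableOn_isCompact
      (isCompact_closedBall b.1 b.2)).mono_set ball_subset_closedBall
  simp_rw [integral_norm_sub_rpow_eq_toReal_deviationFromAverage hp0.le
    hVmeas.aestronglyMeasurable.restrict]
  refine tendsto_sum_toReal_of_tendsto_sum <| tendsto_nhds_zero_of_forall_eventually_le_add_mul
    (K := 2 ^ (p - 1) * (2 ^ p * C)) (by finiteness) fun τ hτ => ?_
  obtain ⟨g, hg, hgc, hVg⟩ := hV.exists_hasCompactSupport_lintegral_rpow_sub_le hp0 hτ.ne'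
  have hgsum := tendsto_sum_deviationFromAverage_ball_of_hasCompactSupport (μ := volume)
    hp0 hg hgc hoverlap hdiam
  refine ⟨fun n => 2 ^ (p - 1) * ∑ b ∈ 𝓑 n, deviationFromAverage volume p g (ball b.1 b.2),
    by simpa using ENNReal.Tendsto.const_mul hgsum (Or.inr (by finiteness)), .of_forall fun n => ?_⟩
  refine (sum_deviationFromAverage_le_add_mul_lintegral_sub (fun _ _ => measurableSet_ball)
    (hoverlap n) hp (fun b _ => hVball b)
    (fun _ _ => (hg.integrable_of_hasCompactSupport hgc).integrableOn)
    (hVmeas.sub hg.measurable).aestronglyMeasurable).trans ?_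
  gcongr

/-- If `𝓑 n` are finite families of open balls covering the unit ball `B²`, with
overlap bounded by `C` and maximal diameter tending to `0`, and `V ∈ L^p(ℝ², ℝ²)`,
then `∑_{B ∈ 𝓑_n} ∫_B ‖V − V̄_B‖^p dx → 0`, where `V̄_B` is the average of `V`
over `B`. Each ball is encoded as a (center, radius) pair. -/
theorem sum_deviation_from_average_tendsto_zero (p : ℝ) (hp : 1 ≤ p) (C : ℕ)
    (V : EuclideanSpace ℝ (Fin 2) → EuclideanSpace ℝ (Fin 2))
    (hVmeas : Measurable V)
    (hVLp : ∫⁻ x, ENNReal.ofReal (‖V x‖ ^ p) ∂volume < ⊤)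
    (𝓑 : ℕ → Finset (EuclideanSpace ℝ (Fin 2) × ℝ))
    (hrad : ∀ n, ∀ b ∈ 𝓑 n, 0 < b.2)
    (hcover : ∀ n, ball (0 : EuclideanSpace ℝ (Fin 2)) 1 ⊆ ⋃ b ∈ 𝓑 n, ball b.1 b.2)
    (hoverlap : ∀ n, ∀ x : EuclideanSpace ℝ (Fin 2),
      ({b | b ∈ 𝓑 n ∧ x ∈ ball b.1 b.2} :
        Set (EuclideanSpace ℝ (Fin 2) × ℝ)).ncard ≤ C)
    (hdiam : ∀ δ : ℝ, 0 < δ → ∃ n₀ : ℕ, ∀ n ≥ n₀, ∀ b ∈ 𝓑 n,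
      Metric.diam (ball b.1 b.2) ≤ δ) :
    Tendsto (fun n => ∑ b ∈ 𝓑 n,
        ∫ x in ball b.1 b.2,
          ‖V x - (volume (ball b.1 b.2)).toReal⁻¹ • (∫ y in ball b.1 b.2, V y)‖ ^ p)
      atTop (nhds 0) :=
  sum_deviation_from_average_tendsto_zero_general p hp C V hVmeas hVLp 𝓑 hoverlap hdiam
end

section
/- Let p > 1. There is a constant C = C(p) > 0 with the following property. Let 0 < ε ≤ 1, let V : ℝ² → ℝ² be a Borel measurable vector field, and let B₁,…,B_N be balls in ℝ², B_i = B_{r_i}(x_i) with 0 < r_i ≤ ε. Call a ball B_i bad if the flux ∫_{∂B_i} ⟨V(y), (y−x_i)/r_i⟩ dH¹(y) belongs to 2πℤ∖{0}. Then the number of bad balls is at most C ε^{p−1} ∑_{i=1}^N ∫_{∂B_i} |⟨V(y), (y−x_i)/r_i⟩|^p dH¹(y). In particular, if ∑_{i=1}^N ∫_{∂B_i} |⟨V, n_{B_i}⟩|^p dH¹ ≤ K ε^{−1} ∫_{ℝ²} ‖V‖^p dx for some K > 0, then the number of bad balls is at most C K ε^{p−2} ∫_{ℝ²} ‖V‖^p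 dx. -/
/-! A bad ball has flux of modulus at least `2π`. Hölder's inequality on its boundary circle,
whose length is `2πr ≤ 2πε`, gives `(2π)^p ≤ |flux|^p ≤ (∫ |⟨V, n⟩|^p) (2πε)^{p-1}`, so every
bad ball carries `p`-energy at least `2π ε^{1-p}`. Summing over the bad balls yields the bound
with `C = 1/(2π)`; the second bound is the first one combined with the energy hypothesis. -/

open MeasureTheory Metric Real RealInnerProductSpace
open scoped ENNReal

theorem hausdorffMeasure_circle_le (c : ℂ) {R : ℝ} (hR : 0 ≤ R) :
    μH[1] (sphere c R) ≤ ENNReal.ofReal (2 * π * R) := by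
  have hcircle : sphere c R = circleMap c R '' Set.Icc 0 (0 + 2 * π) := by
    rw [(periodic_circleMap c R).image_Icc two_pi_pos 0, range_circleMap, abs_of_nonneg hR]
  have hIcc : (μH[1] : Measure ℝ) (Set.Icc 0 (0 + 2 * π)) = ENNReal.ofReal (2 * π) := by
    rw [hausdorffMeasure_real, Real.volume_Icc]
    norm_num
  calc μH[1] (sphere c R)
      ≤ (Real.nnabs R : ℝ≥0∞) ^ (1 : ℝ) * μH[1] (Set.Icc 0 (0 + 2 * π)) := by
        rw [hcircle]
        exact (lipschitzWith_circleMap c R).hausdorffMeasure_image_le zero_le_one _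
    _ = ENNReal.ofReal (2 * π * R) := by
        rw [hIcc, ENNReal.rpow_one, mul_comm (2 * π) R, ENNReal.ofReal_mul hR,
          Real.nnabs_of_nonneg hR]
        rfl

theorem abs_integral_rpow_le_integral_abs_rpow_mul {α : Type*} [MeasurableSpace α]
    {ν : Measure α} [IsFiniteMeasure ν] {p : ℝ} (hp : 1 ≤ p) {f : α → ℝ}
    (hf : AEStronglyMeasurable f ν) (hfp : Integrable (fun a => |f a| ^ p) ν) :
    |∫ a, f a ∂ν| ^ p ≤ (∫ a, |f a| ^ p ∂ν) * ν.real Set.univ ^ (p - 1) := by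
  have hp0 : 0 < p := one_pos.trans_le hp
  have habs : |∫ a, f a ∂ν| ≤ ∫ a, |f a| ∂ν := abs_integral_le_integral_abs
  rcases hp.eq_or_lt with rfl | hp1
  · simpa using habs
  have hmem : MemLp (fun a => |f a|) (ENNReal.ofReal p) ν := by
    refine (integrable_norm_rpow_iff hf.norm (by simpa using hp0) ENNReal.ofReal_ne_top).mp ?_
    simpa [ENNReal.toReal_ofReal hp0.le] using hfp
  have hholder := integral_mul_le_Lp_mul_Lq_of_nonneg (Real.HolderConjugate.conjExponent hp1)
    (.of_forall fun a => abs_nonneg (f a)) (.of_forall fun _ => zero_le_one) hmem (memLp_const 1)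
  simp only [mul_one, one_rpow, integral_const, smul_eq_mul, conjExponent, one_div_div]
    at hholder
  have hI : 0 ≤ ∫ a, |f a| ^ p ∂ν := integral_nonneg fun a => by positivity
  calc |∫ a, f a ∂ν| ^ p
      ≤ ((∫ a, |f a| ^ p ∂ν) ^ (1 / p) * ν.real Set.univ ^ ((p - 1) / p)) ^ p := by
        gcongr
        exact habs.trans hholder
    _ = (∫ a, |f a| ^ p ∂ν) * ν.real Set.univ ^ (p - 1) := by
        rw [mul_rpow (by positivity) (by positivity), ← rpow_mul hI, ← rpow_mul (by positivity),
          one_div_mul_cancel hp0.ne', div_mul_cancel₀ _ hp0.ne', rpow_one]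

section FinrankTwo

variable {E : Type*} [NormedAddCommGroup E] [InnerProductSpace ℝ E] [MeasurableSpace E]
  [BorelSpace E]

theorem hausdorffMeasure_sphere_le_of_finrank_eq_two (hE : Module.finrank ℝ E = 2)
    (x : E) {R : ℝ} (hR : 0 ≤ R) :
    μH[1] (sphere x R) ≤ ENNReal.ofReal (2 * π * R) := by
  have := FiniteDimensional.of_finrank_eq_succ hE
  let e : ℂ ≃ₗᵢ[ℝ] E :=
    Complex.isometryOfOrthonormal ((stdOrthonormalBasis ℝ E).reindex (finCongr hE))
  rw [← e.apply_symm_apply x, ← e.image_sphere,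
    e.isometry.hausdorffMeasure_image (.inr e.surjective)]
  exact hausdorffMeasure_circle_le _ hR

theorem abs_setIntegral_sphere_rpow_le_of_finrank_eq_two (hE : Module.finrank ℝ E = 2)
    {p : ℝ} (hp : 1 ≤ p) (x : E) {R : ℝ} (hR : 0 ≤ R) {f : E → ℝ}
    (hf : AEStronglyMeasurable f (μH[1].restrict (sphere x R)))
    (hfp : IntegrableOn (fun y => |f y| ^ p) (sphere x R) μH[1]) :
    |∫ y in sphere x R, f y ∂μH[1]| ^ p
      ≤ (∫ y in sphere x R, |f y| ^ p ∂μH[1]) * (2 * π * R) ^ (p - 1) := by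
  have hsphere := hausdorffMeasure_sphere_le_of_finrank_eq_two hE x hR
  have : IsFiniteMeasure (μH[1].restrict (sphere x R)) :=
    isFiniteMeasure_restrict.mpr (hsphere.trans_lt ENNReal.ofReal_lt_top).ne
  refine (abs_integral_rpow_le_integral_abs_rpow_mul hp hf hfp).trans ?_
  gcongr
  rw [measureReal_restrict_apply_univ]
  exact ENNReal.toReal_le_of_le_ofReal (by positivity) hsphere

theorem two_pi_le_rpow_mul_setIntegral_sphere (hE : Module.finrank ℝ E = 2)
    {p : ℝ} (hp : 1 ≤ p) (x : E) {r ε : ℝ} (hr : 0 ≤ r) (hrε : r ≤ ε) {f : E → ℝ}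
    (hf : AEStronglyMeasurable f (μH[1].restrict (sphere x r)))
    (hfp : IntegrableOn (fun y => |f y| ^ p) (sphere x r) μH[1]) {k : ℤ} (hk : k ≠ 0)
    (hflux : ∫ y in sphere x r, f y ∂μH[1] = 2 * π * k) :
    2 * π ≤ ε ^ (p - 1) * ∫ y in sphere x r, |f y| ^ p ∂μH[1] := by
  have h2π : 2 * π ≤ |∫ y in sphere x r, f y ∂μH[1]| := by
    rw [hflux, abs_mul, abs_of_pos two_pi_pos]
    exact le_mul_of_one_le_right two_pi_pos.le (by exact_mod_cast Int.one_le_abs hk)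
  have key : (2 * π) ^ (p - 1) * (2 * π)
      ≤ (2 * π) ^ (p - 1) * (ε ^ (p - 1) * ∫ y in sphere x r, |f y| ^ p ∂μH[1]) := by
    calc (2 * π) ^ (p - 1) * (2 * π) = (2 * π) ^ p := by
          rw [← rpow_add_one two_pi_pos.ne', sub_add_cancel]
      _ ≤ |∫ y in sphere x r, f y ∂μH[1]| ^ p := by gcongr
      _ ≤ (∫ y in sphere x r, |f y| ^ p ∂μH[1]) * (2 * π * r) ^ (p - 1) :=
          abs_setIntegral_sphere_rpow_le_of_finrank_eq_two hE hp x hr hf hfp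
      _ ≤ (∫ y in sphere x r, |f y| ^ p ∂μH[1]) * (2 * π * ε) ^ (p - 1) := by
          gcongr
      _ = _ := by
          rw [mul_rpow two_pi_pos.le (hr.trans hrε)]
          ring
  exact le_of_mul_le_mul_left key (by positivity)

end FinrankTwo

theorem ncard_mul_le_sum {ι : Type*} [Fintype ι] {s : Set ι} {A : ι → ℝ} {c : ℝ}
    (hA : ∀ i, 0 ≤ A i) (hc : ∀ i ∈ s, c ≤ A i) :
    s.ncard * c ≤ ∑ i, A i := by
  classical
  rw [Set.ncard_eq_toFinset_card' s, ← nsmul_eq_mul]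
  calc s.toFinset.card • c ≤ ∑ i ∈ s.toFinset, A i :=
        Finset.card_nsmul_le_sum _ _ _ fun i hi => hc i (Set.mem_toFinset.mp hi)
    _ ≤ ∑ i, A i := Finset.sum_le_sum_of_subset_of_nonneg (Finset.subset_univ _)
        fun i _ _ => hA i

/-- For `p > 1` there is `C = C(p) > 0` such that: for `0 < ε ≤ 1`, a Borel vector
field `V`, and balls `B_{r_i}(x_i)` with `0 < r_i ≤ ε` (with `p`-integrable normal
component on each boundary circle), the number of *bad* balls — those whose flux
`∫_{∂B_i} ⟨V, n⟩ dH¹` lies in `2πℤ∖{0}` — is at most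
`C ε^{p−1} ∑_i ∫_{∂B_i} |⟨V, n⟩|^p dH¹`; consequently, if this last sum is at most
`K ε⁻¹ ∫‖V‖^p`, the number of bad balls is at most `C K ε^{p−2} ∫‖V‖^p`. -/
theorem bad_balls_count (p : ℝ) (hp : 1 < p) :
    ∃ C : ℝ, 0 < C ∧
      ∀ (ε : ℝ), 0 < ε → ε ≤ 1 →
      ∀ (V : EuclideanSpace ℝ (Fin 2) → EuclideanSpace ℝ (Fin 2)), Measurable V →
      ∀ (N : ℕ) (x : Fin N → EuclideanSpace ℝ (Fin 2)) (r : Fin N → ℝ),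
        (∀ i, 0 < r i) → (∀ i, r i ≤ ε) →
        (∀ i, IntegrableOn (fun y => |⟪V y, (r i)⁻¹ • (y - x i)⟫| ^ p)
          (sphere (x i) (r i)) μH[1]) →
        ((({i : Fin N | ∃ k : ℤ, k ≠ 0 ∧
              (∫ y in sphere (x i) (r i), ⟪V y, (r i)⁻¹ • (y - x i)⟫ ∂μH[1])
                = 2 * π * (k : ℝ)} : Set (Fin N)).ncard : ℝ)
            ≤ C * ε ^ (p - 1) *
              ∑ i : Fin N, ∫ y in sphere (x i) (r i),
                |⟪V y, (r i)⁻¹ • (y - x i)⟫| ^ p ∂μH[1]) ∧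
        (∀ K : ℝ, 0 < K →
          (∑ i : Fin N, ∫ y in sphere (x i) (r i),
              |⟪V y, (r i)⁻¹ • (y - x i)⟫| ^ p ∂μH[1])
            ≤ K * ε⁻¹ * ∫ z, ‖V z‖ ^ p →
          ((({i : Fin N | ∃ k : ℤ, k ≠ 0 ∧
                (∫ y in sphere (x i) (r i), ⟪V y, (r i)⁻¹ • (y - x i)⟫ ∂μH[1])
                  = 2 * π * (k : ℝ)} : Set (Fin N)).ncard : ℝ)
              ≤ C * K * ε ^ (p - 2) * ∫ z, ‖V z‖ ^ p)) := by
  refine ⟨(2 * π)⁻¹, by positivity, ?_⟩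
  intro ε hε _ V hV N x r hr hrε hint
  set bad := {i : Fin N | ∃ k : ℤ, k ≠ 0 ∧
    (∫ y in sphere (x i) (r i), ⟪V y, (r i)⁻¹ • (y - x i)⟫ ∂μH[1]) = 2 * π * (k : ℝ)}
  set energy : Fin N → ℝ := fun i =>
    ∫ y in sphere (x i) (r i), |⟪V y, (r i)⁻¹ • (y - x i)⟫| ^ p ∂μH[1]
  have hcount : (bad.ncard : ℝ) * (2 * π) ≤ ∑ i, ε ^ (p - 1) * energy i := by
    refine ncard_mul_le_sum
      (fun i => mul_nonneg (by positivity) (integral_nonneg fun y => by positivity)) ?_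
    rintro i ⟨k, hk, hflux⟩
    refine two_pi_le_rpow_mul_setIntegral_sphere finrank_euclideanSpace_fin hp.le (x i)
      (hr i).le (hrε i) ?_ (hint i) hk hflux
    exact (hV.inner (by fun_prop)).aestronglyMeasurable
  have hmain : (bad.ncard : ℝ) ≤ (2 * π)⁻¹ * ε ^ (p - 1) * ∑ i, energy i := by
    rw [← Finset.mul_sum] at hcount
    rw [mul_assoc, inv_mul_eq_div, le_div_iff₀ two_pi_pos]
    exact hcount
  refine ⟨hmain, fun K _ hK => hmain.trans ?_⟩
  calc (2 * π)⁻¹ * ε ^ (p - 1) * ∑ i, energy i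
      ≤ (2 * π)⁻¹ * ε ^ (p - 1) * (K * ε⁻¹ * ∫ z, ‖V z‖ ^ p) := by gcongr
    _ = (2 * π)⁻¹ * K * ε ^ (p - 2) * ∫ z, ‖V z‖ ^ p := by
        rw [show p - 2 = p - 1 - 1 by ring, rpow_sub_one hε.ne' (p - 1)]
        ring
end
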